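/- Let S be an essentially small triangulated category with a metric, and let F : S → T be a good extension into a triangulated category T with coproducts. If E ∈ T is the homotopy colimit of F(E_*) for a Cauchy sequence E_* in S, and X ∈ T is arbitrary, then the natural map Hom_T(E, X) → Hom_{Mod-S}(y(E), y(X)) is surjective with kernel isomorphic to lim^1 Hom_T(T F(E_i), X), where y : T → Mod-S sends A to Hom(F(−), A). -/

import Mathlib

namespace Stmt3

open CategoryTheory Category Limits Pretriangulated ZeroObject

universe v u u'

variable {S : Type u} [Category.{v} S] [Preadditive S] [HasZeroObject S]
  [HasShift S ℤ] [∀ n : ℤ, (CategoryTheory.shiftFunctor S n).Additive] [Pretriangulated S]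

structure TriMetric (S : Type u) [Category.{v} S] [Preadditive S] [HasZeroObject S]
    [HasShift S ℤ] [∀ n : ℤ, (CategoryTheory.shiftFunctor S n).Additive] [Pretriangulated S] where
  M : ℕ → Set S
  zero_mem : ∀ i, (0 : S) ∈ M i
  antitone : ∀ i, M (i + 1) ⊆ M i
  ext_closed : ∀ i, ∀ T ∈ (distTriang S), T.obj₁ ∈ M i → T.obj₃ ∈ M i → T.obj₂ ∈ M i

def CauchySeq (μ : TriMetric S) (E : ℕ ⥤ S) : Prop :=
  ∀ i : ℕ, 0 < i → ∀ j : ℤ, ∃ N : ℕ, 0 < N ∧ ∀ m m' : ℕ, N ≤ m → ∀ (hmm : m < m'),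
    ∀ (D : S) (g : E.obj m' ⟶ D) (h : D ⟶ (E.obj m)⟦(1 : ℤ)⟧),
      Triangle.mk (E.map (homOfLE hmm.le)) g h ∈ (distTriang S) → D⟦j⟧ ∈ μ.M i

variable {T : Type u'} [Category.{v} T] [Preadditive T] [HasZeroObject T]
  [HasShift T ℤ] [∀ n : ℤ, (CategoryTheory.shiftFunctor T n).Additive] [Pretriangulated T]
  [HasCoproducts.{0} T]

variable (F : S ⥤ T) [F.Additive]

/-- `y : T ⥤ Mod-S` on objects: `y(X) = Hom_T(F(−), X)`. -/
def yObj (X : T) : Sᵒᵖ ⥤ AddCommGrpCat.{v} := F.op ⋙ preadditiveYoneda.obj X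

/-- `y` on morphisms. -/
def yHom {X X' : T} (φ : X ⟶ X') : yObj F X ⟶ yObj F X' :=
  Functor.whiskerLeft F.op (preadditiveYoneda.map φ)

/-- The canonical map `Y(s₀) ⟶ y(X)` induced by `k : F(s₀) ⟶ X`. -/
def yMap {s₀ : S} {X : T} (k : F.obj s₀ ⟶ X) : preadditiveYoneda.obj s₀ ⟶ yObj F X where
  app s := AddCommGrpCat.ofHom
    { toFun := fun f => F.map f ≫ k
      map_zero' := by
        change F.map (0 : s.unop ⟶ s₀) ≫ k = 0
        simp
      map_add' := fun (f g : s.unop ⟶ s₀) => by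
        change F.map (f + g) ≫ k = F.map f ≫ k + F.map g ≫ k
        exact (congrArg (· ≫ k) (F.map_add (f := f) (g := g))).trans (Preadditive.add_comp _ _ _ _ _ _) }
  naturality a b t := by
    refine AddCommGrpCat.ext fun (f : a.unop ⟶ s₀) => ?_
    change F.map (t.unop ≫ f) ≫ k = F.map t.unop ≫ (F.map f ≫ k)
    exact (congrArg (· ≫ k) (F.map_comp t.unop f)).trans (Category.assoc _ _ _)

variable (E : ℕ ⥤ S)

/-- The endomorphism "shift" of `∐ F(E_i)` used in the definition of homotopy colimits. -/
noncomputable def shiftMapCoprod : (∐ fun i : ℕ => F.obj (E.obj i)) ⟶ (∐ fun i : ℕ => F.obj (E.obj i)) :=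
  Sigma.desc fun i => F.map (E.map (homOfLE (Nat.le_succ i))) ≫ Sigma.ι (fun i : ℕ => F.obj (E.obj i)) (i + 1)

/-- The map `1 − shift`. -/
noncomputable def oneMinusShift : (∐ fun i : ℕ => F.obj (E.obj i)) ⟶ (∐ fun i : ℕ => F.obj (E.obj i)) :=
  𝟙 _ - shiftMapCoprod F E

/-- `X`, with structure maps `π` from the coproduct, is a homotopy colimit of `F ∘ E` if
the triangle `∐ F(E_i) → ∐ F(E_i) → X → Σ ∐ F(E_i)` is distinguished. -/
def IsHoColim (X : T) (π : (∐ fun i : ℕ => F.obj (E.obj i)) ⟶ X)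
    (δ : X ⟶ (∐ fun i : ℕ => F.obj (E.obj i))⟦(1 : ℤ)⟧) : Prop :=
  Triangle.mk (oneMinusShift F E) π δ ∈ distTriang T

/-- `y(X)`, equipped with the canonical maps from the `Y(E_i)`, is the colimit of
`Y(E_*)` in `Mod-S`. -/
def IsYColimit (X : T) (π : (∐ fun i : ℕ => F.obj (E.obj i)) ⟶ X) : Prop :=
  ∀ (W : Sᵒᵖ ⥤ AddCommGrpCat.{v}) (w : ∀ i : ℕ, preadditiveYoneda.obj (E.obj i) ⟶ W),
    (∀ i : ℕ, preadditiveYoneda.map (E.map (homOfLE (Nat.le_succ i))) ≫ w (i + 1) = w i) →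
    ∃! u : yObj F X ⟶ W,
      ∀ i : ℕ, yMap F (Sigma.ι (fun i : ℕ => F.obj (E.obj i)) i ≫ π) ≫ u = w i

/-- `F : S ⥤ T` is a good extension with respect to the metric `μ` if for every Cauchy
sequence `E_*` in `S` the natural map `colim Y(E_*) ⟶ y(hocolim F(E_*))` is an
isomorphism, i.e. `y(hocolim F(E_*))` is the colimit of `Y(E_*)`. -/
def GoodExtension (μ : TriMetric S) : Prop :=
  ∀ (E : ℕ ⥤ S), CauchySeq μ E →
    ∀ (X : T) (π : (∐ fun i : ℕ => F.obj (E.obj i)) ⟶ X)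
      (δ : X ⟶ (∐ fun i : ℕ => F.obj (E.obj i))⟦(1 : ℤ)⟧),
      IsHoColim F E X π δ → IsYColimit F E X π


/-- The differential of the inverse system `i ↦ Hom(ΣF(E_i), X)`, whose cokernel is
`lim¹ Hom(ΣF(E_i), X)`. -/
noncomputable def dMap (Xt : T) :
    (∀ i : ℕ, ((F.obj (E.obj i))⟦(1 : ℤ)⟧ ⟶ Xt)) →+
      (∀ i : ℕ, ((F.obj (E.obj i))⟦(1 : ℤ)⟧ ⟶ Xt)) :=
  AddMonoidHom.mk'
    (fun x i => x i - (F.map (E.map (homOfLE (Nat.le_succ i))))⟦(1 : ℤ)⟧' ≫ x (i + 1))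
    (by
      intro x y
      funext i
      simp [Preadditive.comp_add]
      abel)

/-- `lim¹` of the inverse system `i ↦ Hom(ΣF(E_i), X)`. -/
noncomputable def lim1 (Xt : T) : Type _ :=
  (∀ i : ℕ, ((F.obj (E.obj i))⟦(1 : ℤ)⟧ ⟶ Xt)) ⧸ (dMap F E Xt).range

/-!
Apply `Hom(-, X)` to the distinguished triangle `∐ F(E_i) → ∐ F(E_i) → E → Σ ∐ F(E_i)`.
Since `y(E)` is the colimit of the `Y(E_i)`, a map `y(E) ⟶ y(X)` is, by Yoneda, a compatible
family `F(E_i) ⟶ X`, i.e. a map `∐ F(E_i) ⟶ X` killed by `1 − shift`; by exactness it factors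
through `E`, which gives surjectivity. Moreover `y(φ) = 0` iff `φ` vanishes on `∐ F(E_i)`, so by
exactness again the kernel is the cokernel of `Hom(Σ(1 − shift), X)`, and since the shift
commutes with coproducts this cokernel is `lim¹ Hom(Σ F(E_i), X)`.
-/

section Triangulated

variable {C : Type*} [Category C] [Preadditive C] [HasZeroObject C] [HasShift C ℤ]
  [∀ n : ℤ, (shiftFunctor C n).Additive] [Pretriangulated C]
  (Tr : Triangle C) (hT : Tr ∈ distTriang C) (X : C)
include hT

lemma range_leftComp_mor₃ :
    (Preadditive.leftComp X Tr.mor₃).range = (Preadditive.leftComp X Tr.mor₂).ker := by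
  ext φ
  refine ⟨?_, fun hφ => ?_⟩
  · rintro ⟨g, rfl⟩
    exact (comp_distTriang_mor_zero₂₃_assoc Tr hT g).trans zero_comp
  · obtain ⟨g, hg⟩ := Triangle.yoneda_exact₃ Tr hT φ hφ
    exact ⟨g, hg.symm⟩

lemma ker_leftComp_mor₃ :
    (Preadditive.leftComp X Tr.mor₃).ker = (Preadditive.leftComp X (Tr.mor₁⟦(1 : ℤ)⟧')).range := by
  ext x
  refine ⟨fun hx => ?_, ?_⟩
  · obtain ⟨g, hg⟩ := Triangle.yoneda_exact₃ _ (rot_of_distTriang Tr hT) x hx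
    exact ⟨-g, (Preadditive.comp_neg _ _).trans ((Preadditive.neg_comp _ _).symm.trans hg.symm)⟩
  · rintro ⟨g, rfl⟩
    exact (comp_distTriang_mor_zero₃₁_assoc Tr hT g).trans zero_comp

noncomputable def kerLeftCompMor₂Equiv :
    (Preadditive.leftComp X Tr.mor₂).ker ≃+
      (Tr.obj₁⟦(1 : ℤ)⟧ ⟶ X) ⧸ (Preadditive.leftComp X (Tr.mor₁⟦(1 : ℤ)⟧')).range :=
  ((AddEquiv.addSubgroupCongr (range_leftComp_mor₃ Tr hT X)).symm.trans
    (QuotientAddGroup.quotientKerEquivRange _).symm).trans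
    (QuotientAddGroup.quotientAddEquivOfEq (ker_leftComp_mor₃ Tr hT X))

end Triangulated

def cofanHomAddEquiv {C : Type*} [Category C] [Preadditive C] {ι : Type*} {Y : ι → C}
    {c : Cofan Y} (hc : IsColimit c) (X : C) : (c.pt ⟶ X) ≃+ ∀ i, (Y i ⟶ X) where
  toFun x i := c.inj i ≫ x
  invFun f := Cofan.IsColimit.desc hc f
  left_inv _ := Cofan.IsColimit.hom_ext hc _ _ fun i => Cofan.IsColimit.fac hc _ i
  right_inv f := funext fun i => Cofan.IsColimit.fac hc f i
  map_add' _ _ := funext fun _ => Preadditive.comp_add _ _ _ _ _ _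

section Yoneda

variable {C D : Type*} [Category.{v} C] [Category.{v} D] [Preadditive C] [Preadditive D]
  (G : C ⥤ D) [G.Additive]

lemma yMap_comp_yHom {c : C} {X X' : D} (k : G.obj c ⟶ X) (φ : X ⟶ X') :
    yMap G k ≫ yHom G φ = yMap G (k ≫ φ) := by
  ext s f
  exact assoc (G.map f) k φ

lemma preadditiveYoneda_map_comp_yMap {c c' : C} {X : D} (e : c ⟶ c') (k : G.obj c' ⟶ X) :
    preadditiveYoneda.map e ≫ yMap G k = yMap G (G.map e ≫ k) := by
  ext s f
  exact (congrArg (· ≫ k) (G.map_comp f e)).trans (assoc _ _ _)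

lemma yMap_zero {c : C} {X : D} : yMap G (0 : G.obj c ⟶ X) = 0 := by
  ext s f
  exact comp_zero

lemma yMap_app_id {c : C} {X : D} (k : G.obj c ⟶ X) : (yMap G k).app (Opposite.op c) (𝟙 c) = k :=
  (congrArg (· ≫ k) (G.map_id c)).trans (id_comp k)

lemma yMap_injective {c : C} {X : D} : Function.Injective (yMap G : (G.obj c ⟶ X) → _) :=
  fun k k' h => by rw [← yMap_app_id G k, ← yMap_app_id G k', h]

lemma yMap_app_id_eq {c : C} {X : D} (w : preadditiveYoneda.obj c ⟶ yObj G X) :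
    yMap G (w.app (Opposite.op c) (𝟙 c)) = w := by
  have naturality {s : C} (f : s ⟶ c) : w.app (Opposite.op s) f = G.map f ≫ w.app _ (𝟙 c) := by
    have h := ConcreteCategory.congr_hom (w.naturality f.op) (𝟙 c)
    change w.app _ (f ≫ 𝟙 c) = G.map f ≫ w.app (Opposite.op c) (𝟙 c) at h
    simpa using h
  ext s f
  exact (naturality f).symm

end Yoneda

section Coproducts

variable {C D : Type*} [Category.{v} C] [Category.{v} D] [HasCoproducts.{0} D]
  (G : C ⥤ D) (Y : ℕ ⥤ C)

lemma ι_shiftMapCoprod (i : ℕ) :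
    Sigma.ι (fun i : ℕ => G.obj (Y.obj i)) i ≫ shiftMapCoprod G Y =
      G.map (Y.map (homOfLE (Nat.le_succ i))) ≫ Sigma.ι (fun i : ℕ => G.obj (Y.obj i)) (i + 1) :=
  Sigma.ι_desc _ _

variable [Preadditive D]

lemma ι_oneMinusShift (i : ℕ) :
    Sigma.ι (fun i : ℕ => G.obj (Y.obj i)) i ≫ oneMinusShift G Y =
      Sigma.ι (fun i : ℕ => G.obj (Y.obj i)) i -
        G.map (Y.map (homOfLE (Nat.le_succ i))) ≫
          Sigma.ι (fun i : ℕ => G.obj (Y.obj i)) (i + 1) := by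
  rw [oneMinusShift, Preadditive.comp_sub, comp_id, ι_shiftMapCoprod]

variable [Preadditive C] [G.Additive] {P : D} {π : (∐ fun i : ℕ => G.obj (Y.obj i)) ⟶ P}

lemma preadditiveYoneda_map_comp_yMap_ι_comp (hπ : shiftMapCoprod G Y ≫ π = π) (i : ℕ) :
    preadditiveYoneda.map (Y.map (homOfLE (Nat.le_succ i))) ≫
        yMap G (Sigma.ι (fun i : ℕ => G.obj (Y.obj i)) (i + 1) ≫ π) =
      yMap G (Sigma.ι (fun i : ℕ => G.obj (Y.obj i)) i ≫ π) := by
  rw [preadditiveYoneda_map_comp_yMap, ← assoc, ← ι_shiftMapCoprod, assoc, hπ]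

lemma IsYColimit.hom_ext (hY : IsYColimit G Y P π) (hπ : shiftMapCoprod G Y ≫ π = π)
    {W : Cᵒᵖ ⥤ AddCommGrpCat.{v}} {u u' : yObj G P ⟶ W}
    (h : ∀ i, yMap G (Sigma.ι (fun i : ℕ => G.obj (Y.obj i)) i ≫ π) ≫ u =
      yMap G (Sigma.ι (fun i : ℕ => G.obj (Y.obj i)) i ≫ π) ≫ u') : u = u' := by
  obtain ⟨_, -, huniq⟩ := hY W
    (fun i => yMap G (Sigma.ι (fun i : ℕ => G.obj (Y.obj i)) i ≫ π) ≫ u) fun i => by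
    rw [← assoc, preadditiveYoneda_map_comp_yMap_ι_comp G Y hπ i]
  exact (huniq u fun _ => rfl).trans (huniq u' fun i => (h i).symm).symm

lemma IsYColimit.yHom_eq_zero_iff (hY : IsYColimit G Y P π) (hπ : shiftMapCoprod G Y ≫ π = π)
    {X : D} (φ : P ⟶ X) : yHom G φ = 0 ↔ π ≫ φ = 0 := by
  refine ⟨fun h => Sigma.hom_ext _ _ fun i => ?_, fun h => hY.hom_ext G Y hπ fun i => ?_⟩
  · have h₁ := ConcreteCategory.congr_hom
      (congrArg (fun η : yObj G P ⟶ yObj G X => η.app (Opposite.op (Y.obj i))) h)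
      (show G.obj (Y.obj i) ⟶ P from Sigma.ι (fun i : ℕ => G.obj (Y.obj i)) i ≫ π)
    rw [comp_zero, ← assoc]
    exact h₁
  · rw [yMap_comp_yHom, assoc, h, comp_zero, yMap_zero, comp_zero]

end Coproducts

noncomputable def shiftCoprodHomAddEquiv {D : Type*} [Category D] [Preadditive D] [HasShift D ℤ]
    {ι : Type*} (Z : ι → D) [HasCoproduct Z] (n : ℤ) (X : D) :
    ((∐ Z)⟦n⟧ ⟶ X) ≃+ ∀ i, ((Z i)⟦n⟧ ⟶ X) :=
  cofanHomAddEquiv (isColimitOfHasCoproductOfPreservesColimit (shiftFunctor D n) Z) X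

section HomotopyColimit

variable {C D : Type*} [Category.{v} C] [Category.{v} D] [Preadditive D] [HasShift D ℤ]
  [∀ n : ℤ, (shiftFunctor D n).Additive] [HasCoproducts.{0} D]
  {G : C ⥤ D} {Y : ℕ ⥤ C} {P : D} {π : (∐ fun i : ℕ => G.obj (Y.obj i)) ⟶ P}
  {δ : P ⟶ (∐ fun i : ℕ => G.obj (Y.obj i))⟦(1 : ℤ)⟧}

lemma shiftCoprodHomAddEquiv_shift_oneMinusShift_comp (X : D)
    (x : (∐ fun i : ℕ => G.obj (Y.obj i))⟦(1 : ℤ)⟧ ⟶ X) :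
    shiftCoprodHomAddEquiv _ 1 X ((oneMinusShift G Y)⟦(1 : ℤ)⟧' ≫ x) =
      dMap G Y X (shiftCoprodHomAddEquiv _ 1 X x) := by
  funext i
  let ι' := Sigma.ι (fun i : ℕ => G.obj (Y.obj i))
  change (ι' i)⟦(1 : ℤ)⟧' ≫ (oneMinusShift G Y)⟦(1 : ℤ)⟧' ≫ x =
    (ι' i)⟦(1 : ℤ)⟧' ≫ x -
      (G.map (Y.map (homOfLE (Nat.le_succ i))))⟦(1 : ℤ)⟧' ≫ (ι' (i + 1))⟦(1 : ℤ)⟧' ≫ x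
  rw [← Functor.map_comp_assoc, ι_oneMinusShift, Functor.map_sub, Functor.map_comp,
    Preadditive.sub_comp, assoc]

noncomputable def quotientRangeShiftOneMinusShiftEquivLim1 (X : D) :
    ((∐ fun i : ℕ => G.obj (Y.obj i))⟦(1 : ℤ)⟧ ⟶ X) ⧸
        (Preadditive.leftComp X ((oneMinusShift G Y)⟦(1 : ℤ)⟧')).range ≃+
      (∀ i : ℕ, ((G.obj (Y.obj i))⟦(1 : ℤ)⟧ ⟶ X)) ⧸ (dMap G Y X).range :=
  QuotientAddGroup.congr _ _ (shiftCoprodHomAddEquiv _ 1 X) <| by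
    have hconj : (shiftCoprodHomAddEquiv _ 1 X).toAddMonoidHom.comp
        (Preadditive.leftComp X ((oneMinusShift G Y)⟦(1 : ℤ)⟧')) =
        (dMap G Y X).comp (shiftCoprodHomAddEquiv _ 1 X).toAddMonoidHom :=
      AddMonoidHom.ext fun x => shiftCoprodHomAddEquiv_shift_oneMinusShift_comp X x
    rw [AddEquiv.toAddMonoidHom_eq_coe] at hconj
    rw [AddMonoidHom.map_range, hconj, AddMonoidHom.range_comp,
      AddMonoidHom.range_eq_top_of_surjective _ (shiftCoprodHomAddEquiv _ 1 X).surjective,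
      ← AddMonoidHom.range_eq_map]

variable [HasZeroObject D] [Pretriangulated D]

lemma IsHoColim.shiftMapCoprod_comp (h : IsHoColim G Y P π δ) : shiftMapCoprod G Y ≫ π = π := by
  have h₀ : oneMinusShift G Y ≫ π = 0 := comp_distTriang_mor_zero₁₂ _ h
  rwa [oneMinusShift, Preadditive.sub_comp, id_comp, sub_eq_zero, eq_comm] at h₀

lemma IsHoColim.yHom_surjective [Preadditive C] [G.Additive] (h : IsHoColim G Y P π δ)
    (hY : IsYColimit G Y P π) (X : D) : Function.Surjective (fun φ : P ⟶ X => yHom G φ) := by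
  intro u
  let f (i : ℕ) : G.obj (Y.obj i) ⟶ X :=
    (yMap G (Sigma.ι (fun i : ℕ => G.obj (Y.obj i)) i ≫ π) ≫ u).app (Opposite.op (Y.obj i)) (𝟙 _)
  have hf (i : ℕ) : yMap G (f i) = yMap G (Sigma.ι (fun i : ℕ => G.obj (Y.obj i)) i ≫ π) ≫ u :=
    yMap_app_id_eq G _
  have hcompat (i : ℕ) : G.map (Y.map (homOfLE (Nat.le_succ i))) ≫ f (i + 1) = f i := by
    apply yMap_injective G
    rw [← preadditiveYoneda_map_comp_yMap, hf, hf, ← assoc,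
      preadditiveYoneda_map_comp_yMap_ι_comp G Y h.shiftMapCoprod_comp]
  have hdesc : oneMinusShift G Y ≫ Sigma.desc f = 0 := Sigma.hom_ext _ _ fun i => by
    rw [← assoc, ι_oneMinusShift, Preadditive.sub_comp, Sigma.ι_desc, assoc, Sigma.ι_desc,
      hcompat, sub_self, comp_zero]
  obtain ⟨φ, hπφ⟩ := Triangle.yoneda_exact₂ _ h (Sigma.desc f) hdesc
  change P ⟶ X at φ
  replace hπφ : Sigma.desc f = π ≫ φ := hπφ
  refine ⟨φ, hY.hom_ext G Y h.shiftMapCoprod_comp fun i => ?_⟩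
  dsimp only
  rw [yMap_comp_yHom, ← hf, assoc, ← hπφ, Sigma.ι_desc]

noncomputable def IsHoColim.kerYHomEquivLim1 [Preadditive C] [G.Additive]
    (h : IsHoColim G Y P π δ) (hY : IsYColimit G Y P π) (X : D) :
    {φ : P ⟶ X // yHom G φ = 0} ≃ lim1 G Y X :=
  (Equiv.subtypeEquivRight fun φ => hY.yHom_eq_zero_iff G Y h.shiftMapCoprod_comp φ).trans
    ((kerLeftCompMor₂Equiv _ h X).toEquiv.trans
      (quotientRangeShiftOneMinusShiftEquivLim1 X).toEquiv)

end HomotopyColimit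

theorem statement3
    (μ : TriMetric S) (hgood : GoodExtension F μ)
    (E : ℕ ⥤ S) (hE : CauchySeq μ E)
    (Ept : T) (π : (∐ fun i : ℕ => F.obj (E.obj i)) ⟶ Ept)
    (δ : Ept ⟶ (∐ fun i : ℕ => F.obj (E.obj i))⟦(1 : ℤ)⟧)
    (hhoc : IsHoColim F E Ept π δ) (Xt : T) :
    Function.Surjective (fun φ : Ept ⟶ Xt => yHom F φ) ∧
    Nonempty ({φ : Ept ⟶ Xt // yHom F φ = 0} ≃ lim1 F E Xt) := by
  have hY : IsYColimit F E Ept π := hgood E hE Ept π δ hhoc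
  exact ⟨hhoc.yHom_surjective hY Xt, ⟨hhoc.kerYHomEquivLim1 hY Xt⟩⟩

end Stmt3
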